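/- Let G be a group acting on an additive abelian group M by additive automorphisms, let F : G → M be a crossed homomorphism (F(f * g) = F(g) + g • F(f) for all f, g), and let K = {g ∈ G | F(g) = 0} be its kernel, a subgroup of G. Let N be a normal subgroup of G such that the restriction of F to N is surjective onto M. Then the quotient homomorphism G → G/N restricts to a surjective group homomorphism K → G/N with kernel K ∩ N. -/
import Mathlib


/-- Let `F : G → M` be a crossed homomorphism with kernel the subgroup `K`, and let `N`
be a normal subgroup of `G` on which `F` restricts to a surjection onto `M`. Then the
quotient map `G → G/N` restricts to a surjective homomorphism `K → G/N` whose kernel is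
`K ∩ N`. -/
theorem crossed_hom_ker_surjects_onto_quotient (G : Type*) [Group G] (M : Type*)
    [AddCommGroup M] [DistribMulAction G M] (F : G → M)
    (hF : ∀ f g : G, F (f * g) = F g + g • F f)
    (K : Subgroup G) (hK : ∀ g : G, g ∈ K ↔ F g = 0)
    (N : Subgroup G) [N.Normal] (hN : ∀ m : M, ∃ n ∈ N, F n = m) :
    Function.Surjective ((QuotientGroup.mk' N).comp K.subtype) ∧
      ((QuotientGroup.mk' N).comp K.subtype).ker = N.subgroupOf K := by
  constructor
  · intro q
    obtain ⟨g, rfl⟩ := QuotientGroup.mk'_surjective N q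
    obtain ⟨n, hn, hFn⟩ := hN (g⁻¹ • (-F g))
    have hk : n * g ∈ K := by
      rw [hK, hF, hFn, smul_inv_smul, add_neg_cancel]
    refine ⟨⟨n * g, hk⟩, ?_⟩
    simp only [MonoidHom.comp_apply, Subgroup.coe_subtype, QuotientGroup.mk'_apply]
    rw [QuotientGroup.mk_mul, (QuotientGroup.eq_one_iff n).2 hn, one_mul]
  · ext x
    simp [MonoidHom.mem_ker, Subgroup.mem_subgroupOf, QuotientGroup.eq_one_iff]
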